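/- arXiv:2508.10976 — 3 statements merged into one kernel-verified Lean document; each statement's English description precedes it below -/
import Mathlib

section
/- Let F = (A, att) be an argumentation framework and let S ⊆ A be a set of arguments such that every s ∈ S is attacked by some unattacked argument of F. Let F' = (A \ S, att') be the restriction of F, where att'(a, b) holds iff a, b ∈ A \ S and att(a, b). Then every complete extension of F is a subset of A \ S, and for every E ⊆ A \ S, E is a complete extension of F if and only if E is a complete extension of F'. -/
/-- A set `S` is conflict-free in the AF `(A, att)`. -/
def ConflictFree {α : Type*} (A : Set α) (att : α → α → Prop) (S : Set α) : Prop :=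
  S ⊆ A ∧ ∀ a ∈ S, ∀ b ∈ S, ¬ att a b

/-- `S` defends argument `c` in the AF `(A, att)`. -/
def Defends {α : Type*} (A : Set α) (att : α → α → Prop) (S : Set α) (c : α) : Prop :=
  ∀ b ∈ A, att b c → ∃ a ∈ S, att a b

/-- `S` is admissible in the AF `(A, att)`. -/
def Admissible {α : Type*} (A : Set α) (att : α → α → Prop) (S : Set α) : Prop :=
  ConflictFree A att S ∧ ∀ c ∈ S, Defends A att S c

/-- `S` is a complete extension of the AF `(A, att)`. -/
def CompleteExt {α : Type*} (A : Set α) (att : α → α → Prop) (S : Set α) : Prop :=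
  Admissible A att S ∧ ∀ c ∈ A, Defends A att S c → c ∈ S

/-- `S` is a stable extension of the AF `(A, att)`. -/
def StableExt {α : Type*} (A : Set α) (att : α → α → Prop) (S : Set α) : Prop :=
  ConflictFree A att S ∧ ∀ b ∈ A, b ∉ S → ∃ a ∈ S, att a b

/-- `G` is a grounded extension of the AF `(A, att)`: a complete extension
contained in every complete extension. -/
def GroundedExt {α : Type*} (A : Set α) (att : α → α → Prop) (G : Set α) : Prop :=
  CompleteExt A att G ∧ ∀ E, CompleteExt A att E → G ⊆ E

/-- `E` is a preferred extension of the AF `(A, att)`: a ⊆-maximal complete extension. -/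
def PreferredExt {α : Type*} (A : Set α) (att : α → α → Prop) (E : Set α) : Prop :=
  CompleteExt A att E ∧ ∀ E', CompleteExt A att E' → E ⊆ E' → E' = E

/-- Argument `c` is unattacked in the AF `(A, att)`. -/
def Unattacked {α : Type*} (A : Set α) (att : α → α → Prop) (c : α) : Prop :=
  ∀ b ∈ A, ¬ att b c

/-- Removing arguments attacked by unattacked arguments preserves the complete
extensions: every complete extension of `F` avoids `S`, and a set `E ⊆ A \ S`
is a complete extension of `F` iff it is one of the restricted framework `F'`. -/
theorem complete_restriction {α : Type*} (A : Set α) (att : α → α → Prop)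
    (S : Set α) (hS : S ⊆ A)
    (hSatt : ∀ s ∈ S, ∃ c ∈ A, att c s ∧ Unattacked A att c)
    (att' : α → α → Prop)
    (hatt' : ∀ a b, att' a b ↔ (a ∈ A \ S ∧ b ∈ A \ S ∧ att a b)) :
    (∀ E, CompleteExt A att E → E ⊆ A \ S) ∧
      (∀ E, E ⊆ A \ S → (CompleteExt A att E ↔ CompleteExt (A \ S) att' E)) := by
  -- unattacked arguments are not in S
  have hUnS : ∀ c ∈ A, Unattacked A att c → c ∈ A \ S := by
    intro c hcA hc
    refine ⟨hcA, fun hcS => ?_⟩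
    obtain ⟨d, hdA, hdatt, -⟩ := hSatt c hcS
    exact hc d hdA hdatt
  -- unattacked in F implies unattacked in F'
  have hUn' : ∀ c, Unattacked A att c → Unattacked (A \ S) att' c := by
    intro c hc b hb hb'
    exact hc b hb.1 ((hatt' b c).mp hb').2.2
  have part1 : ∀ E, CompleteExt A att E → E ⊆ A \ S := by
    intro E hE s hsE
    have hsA : s ∈ A := hE.1.1.1 hsE
    refine ⟨hsA, fun hsS => ?_⟩
    obtain ⟨c, hcA, hcatt, hcun⟩ := hSatt s hsS
    obtain ⟨a, haE, haatt⟩ := hE.1.2 s hsE c hcA hcatt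
    exact hcun a (hE.1.1.1 haE) haatt
  refine ⟨part1, fun E hEsub => ⟨?_, ?_⟩⟩
  · -- F complete → F' complete
    intro hE
    refine ⟨⟨⟨hEsub, fun a ha b hb hab => hE.1.1.2 a ha b hb ((hatt' a b).mp hab).2.2⟩,
      fun c hcE b hb hb' => ?_⟩, fun c hc hdef => ?_⟩
    · obtain ⟨a, haE, haatt⟩ := hE.1.2 c hcE b hb.1 ((hatt' b c).mp hb').2.2
      exact ⟨a, haE, (hatt' a b).mpr ⟨hEsub haE, hb, haatt⟩⟩
    · -- show E defends c in F
      refine hE.2 c hc.1 fun b hbA hbatt => ?_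
      by_cases hbS : b ∈ S
      · obtain ⟨c', hc'A, hc'att, hc'un⟩ := hSatt b hbS
        have hc'E : c' ∈ E := hE.2 c' hc'A fun d hdA hdatt => absurd hdatt (hc'un d hdA)
        exact ⟨c', hc'E, hc'att⟩
      · obtain ⟨a, haE, haatt⟩ := hdef b ⟨hbA, hbS⟩ ((hatt' b c).mpr ⟨⟨hbA, hbS⟩, hc, hbatt⟩)
        exact ⟨a, haE, ((hatt' a b).mp haatt).2.2⟩
  · -- F' complete → F complete
    intro hE
    have hEA : E ⊆ A := fun a ha => (hEsub ha).1
    have hdefend : ∀ c ∈ E, Defends A att E c := by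
      intro c hcE b hbA hbatt
      by_cases hbS : b ∈ S
      · obtain ⟨c', hc'A, hc'att, hc'un⟩ := hSatt b hbS
        have hc'E : c' ∈ E := hE.2 c' (hUnS c' hc'A hc'un)
          (fun d hd hdatt => absurd hdatt (hUn' c' hc'un d hd))
        exact ⟨c', hc'E, hc'att⟩
      · obtain ⟨a, haE, haatt⟩ := hE.1.2 c hcE b ⟨hbA, hbS⟩
          ((hatt' b c).mpr ⟨⟨hbA, hbS⟩, hEsub hcE, hbatt⟩)
        exact ⟨a, haE, ((hatt' a b).mp haatt).2.2⟩
    refine ⟨⟨⟨hEA, fun a ha b hb hab =>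
      hE.1.1.2 a ha b hb ((hatt' a b).mpr ⟨hEsub ha, hEsub hb, hab⟩)⟩, hdefend⟩,
      fun c hcA hdef => ?_⟩
    have hcS : c ∉ S := by
      intro hcS
      obtain ⟨c', hc'A, hc'att, hc'un⟩ := hSatt c hcS
      obtain ⟨a, haE, haatt⟩ := hdef c' hc'A hc'att
      exact hc'un a (hEA haE) haatt
    refine hE.2 c ⟨hcA, hcS⟩ fun b hb hb' => ?_
    obtain ⟨a, haE, haatt⟩ := hdef b hb.1 ((hatt' b c).mp hb').2.2
    exact ⟨a, haE, (hatt' a b).mpr ⟨hEsub haE, hb, haatt⟩⟩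
end

section
/- Let F = (A, att) be an argumentation framework and let S ⊆ A be a set of arguments such that every s ∈ S is attacked by some unattacked argument of F. Let F' = (A \ S, att') be the restriction of F to A \ S. Then the stable extensions of F coincide with the stable extensions of F': every stable extension of F is a subset of A \ S and is a stable extension of F', and conversely every stable extension of F' is a stable extension of F. -/
/-- Removing arguments attacked by unattacked arguments preserves the stable
extensions. -/
theorem stable_restriction {α : Type*} (A : Set α) (att : α → α → Prop)
    (S : Set α) (hS : S ⊆ A)
    (hSatt : ∀ s ∈ S, ∃ c ∈ A, att c s ∧ Unattacked A att c)
    (att' : α → α → Prop)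
    (hatt' : ∀ a b, att' a b ↔ (a ∈ A \ S ∧ b ∈ A \ S ∧ att a b)) :
    (∀ E, StableExt A att E → E ⊆ A \ S ∧ StableExt (A \ S) att' E) ∧
      (∀ E, StableExt (A \ S) att' E → StableExt A att E) := by
  constructor
  · intro E ⟨⟨hEA, hcf⟩, hst⟩
    have hES : E ⊆ A \ S := by
      intro x hx
      refine ⟨hEA hx, fun hxS => ?_⟩
      obtain ⟨c, hcA, hca, hun⟩ := hSatt x hxS
      by_cases hcE : c ∈ E
      · exact hcf c hcE x hx hca
      · obtain ⟨a, haE, hab⟩ := hst c hcA hcE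
        exact hun a (hEA haE) hab
    refine ⟨hES, ⟨hES, fun a ha b hb hab => hcf a ha b hb ((hatt' a b).mp hab).2.2⟩,
      fun b hb hbE => ?_⟩
    obtain ⟨a, haE, hab⟩ := hst b hb.1 hbE
    exact ⟨a, haE, (hatt' a b).mpr ⟨hES haE, hb, hab⟩⟩
  · intro E ⟨⟨hEA, hcf⟩, hst⟩
    have hcE : ∀ c ∈ A, Unattacked A att c → c ∈ E := by
      intro c hcA hun
      have hcS : c ∉ S := fun hcS => by
        obtain ⟨d, hdA, hdc, _⟩ := hSatt c hcS
        exact hun d hdA hdc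
      by_contra h
      obtain ⟨a, haE, hac⟩ := hst c ⟨hcA, hcS⟩ h
      exact hun a (hEA haE).1 ((hatt' a c).mp hac).2.2
    refine ⟨⟨fun x hx => (hEA hx).1, fun a ha b hb hab => hcf a ha b hb
      ((hatt' a b).mpr ⟨hEA ha, hEA hb, hab⟩)⟩, fun b hbA hbE => ?_⟩
    by_cases hbS : b ∈ S
    · obtain ⟨c, hcA, hcb, hun⟩ := hSatt b hbS
      exact ⟨c, hcE c hcA hun, hcb⟩
    · obtain ⟨a, haE, hab⟩ := hst b ⟨hbA, hbS⟩ hbE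
      exact ⟨a, haE, ((hatt' a b).mp hab).2.2⟩
end

section
/- Let F = (A, att) be an argumentation framework and let S ⊆ A be a set of arguments such that every s ∈ S is attacked by some unattacked argument of F. Let F' = (A \ S, att') be the restriction of F to A \ S. If G is a grounded extension of F (a complete extension contained in every complete extension of F), then G is also a grounded extension of F', and conversely. -/
/-- Removing arguments attacked by unattacked arguments preserves the grounded
extension. -/
theorem grounded_restriction {α : Type*} (A : Set α) (att : α → α → Prop)
    (S : Set α) (hS : S ⊆ A)
    (hSatt : ∀ s ∈ S, ∃ c ∈ A, att c s ∧ Unattacked A att c)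
    (att' : α → α → Prop)
    (hatt' : ∀ a b, att' a b ↔ (a ∈ A \ S ∧ b ∈ A \ S ∧ att a b))
    (G : Set α) : GroundedExt A att G ↔ GroundedExt (A \ S) att' G := by
  have key : ∀ E, CompleteExt A att E ↔ CompleteExt (A \ S) att' E := by
    intro E
    constructor
    · rintro ⟨⟨⟨hEA, hcf⟩, hdef⟩, hcomp⟩
      have hun : ∀ c ∈ A, Unattacked A att c → c ∈ E := fun c hc hu =>
        hcomp c hc (fun b hb hba => absurd hba (hu b hb))
      have hES : ∀ s ∈ S, s ∉ E := by
        intro s hs hsE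
        obtain ⟨c, hcA, hcs, hcu⟩ := hSatt s hs
        exact hcf c (hun c hcA hcu) s hsE hcs
      have hEA' : E ⊆ A \ S := fun e he => ⟨hEA he, fun hsE => hES e hsE he⟩
      refine ⟨⟨⟨hEA', fun a ha b hb hab => hcf a ha b hb ((hatt' a b).mp hab).2.2⟩, ?_⟩, ?_⟩
      · intro c hc b hb hbc
        obtain ⟨a, haE, hab⟩ := hdef c hc b hb.1 ((hatt' b c).mp hbc).2.2
        exact ⟨a, haE, (hatt' a b).mpr ⟨hEA' haE, hb, hab⟩⟩
      · intro c hc hdc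
        apply hcomp c hc.1
        intro b hb hbc
        by_cases hbS : b ∈ S
        · obtain ⟨d, hdA, hdb, hdu⟩ := hSatt b hbS
          exact ⟨d, hun d hdA hdu, hdb⟩
        · obtain ⟨a, haE, hab⟩ := hdc b ⟨hb, hbS⟩ ((hatt' b c).mpr ⟨⟨hb, hbS⟩, hc, hbc⟩)
          exact ⟨a, haE, ((hatt' a b).mp hab).2.2⟩
    · rintro ⟨⟨⟨hEA, hcf⟩, hdef⟩, hcomp⟩
      have hun' : ∀ c ∈ A \ S, Unattacked A att c → c ∈ E := by
        intro c hc hu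
        apply hcomp c hc
        intro b hb hbc
        exact absurd (((hatt' b c).mp hbc).2.2) (hu b hb.1)
      have hdefF : ∀ c ∈ A \ S, Defends (A \ S) att' E c → Defends A att E c := by
        intro c hc hd b hb hbc
        by_cases hbS : b ∈ S
        · obtain ⟨d, hdA, hdb, hdu⟩ := hSatt b hbS
          have hdS : d ∉ S := fun hdS => by
            obtain ⟨x, hxA, hxd, _⟩ := hSatt d hdS
            exact hdu x hxA hxd
          exact ⟨d, hun' d ⟨hdA, hdS⟩ hdu, hdb⟩
        · obtain ⟨a, haE, hab⟩ := hd b ⟨hb, hbS⟩ ((hatt' b c).mpr ⟨⟨hb, hbS⟩, hc, hbc⟩)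
          exact ⟨a, haE, ((hatt' a b).mp hab).2.2⟩
      refine ⟨⟨⟨fun e he => (hEA he).1, fun a ha b hb hab =>
          hcf a ha b hb ((hatt' a b).mpr ⟨hEA ha, hEA hb, hab⟩)⟩, ?_⟩, ?_⟩
      · intro c hc
        exact hdefF c (hEA hc) (hdef c hc)
      · intro c hc hdc
        have hcS : c ∉ S := by
          intro hcS
          obtain ⟨d, hdA, hdc', hdu⟩ := hSatt c hcS
          obtain ⟨a, haE, had⟩ := hdc d hdA hdc'
          exact hdu a ((hEA haE).1) had
        apply hcomp c ⟨hc, hcS⟩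
        intro b hb hbc
        obtain ⟨a, haE, hab⟩ := hdc b hb.1 ((hatt' b c).mp hbc).2.2
        exact ⟨a, haE, (hatt' a b).mpr ⟨hEA haE, hb, hab⟩⟩
  constructor
  · rintro ⟨hG, hmin⟩
    exact ⟨(key G).mp hG, fun E hE => hmin E ((key E).mpr hE)⟩
  · rintro ⟨hG, hmin⟩
    exact ⟨(key G).mpr hG, fun E hE => hmin E ((key E).mp hE)⟩
end
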